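/- Every formula φ of the cc-modal logic can be represented by a finite (possibly empty) set of process terms: there exists a finite set M of process terms such that, for all process terms q, q ⊨ φ iff p ≲cc q for some p ∈ M. -/
import Mathlib



/-- Process terms: `p ::= 0 | ω | a.p | p + p`. -/
inductive Proc (Act : Type) : Type where
  | nil : Proc Act
  | omega : Proc Act
  | act : Act → Proc Act → Proc Act
  | plus : Proc Act → Proc Act → Proc Act
deriving DecidableEq

/-- Operational semantics of process terms.  The parameter `isL : Act → Bool`
describes the partition `A = A^l ⊎ A^r`: `isL a = true` means `a ∈ A^l`
(contravariant), `isL a = false` means `a ∈ A^r` (covariant). -/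
inductive Step {Act : Type} (isL : Act → Bool) : Proc Act → Act → Proc Act → Prop where
  | omega {b : Act} : isL b = true → Step isL .omega b .omega
  | act {a : Act} {p : Proc Act} : Step isL (.act a p) a p
  | plusL {p q p' : Proc Act} {a : Act} : Step isL p a p' → Step isL (.plus p q) a p'
  | plusR {p q q' : Proc Act} {a : Act} : Step isL q a q' → Step isL (.plus p q) a q'

/-- A covariant-contravariant simulation over an LTS with state space `S`,
actions `Act` partitioned by `isL` (`true` = contravariant `A^l`,
`false` = covariant `A^r`) and transition relation `tr`. -/
def IsCCSim {S Act : Type} (isL : Act → Bool) (tr : S → Act → S → Prop)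
    (R : S → S → Prop) : Prop :=
  ∀ p q, R p q →
    ((∀ a, isL a = false → ∀ p', tr p a p' → ∃ q', tr q a q' ∧ R p' q') ∧
     (∀ b, isL b = true → ∀ q', tr q b q' → ∃ p', tr p b p' ∧ R p' q'))

/-- The covariant-contravariant simulation preorder `p ≲cc q` over an LTS. -/
def CCLE {S Act : Type} (isL : Act → Bool) (tr : S → Act → S → Prop) (p q : S) : Prop :=
  ∃ R, IsCCSim isL tr R ∧ R p q

/-- `p ≲cc q` for process terms. -/
def ccle {Act : Type} (isL : Act → Bool) (p q : Proc Act) : Prop :=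
  CCLE isL (Step isL) p q

/-- The covariant-contravariant modal logic `L`:
`φ ::= ⊥ | ⊤ | φ∧φ | φ∨φ | [b]φ | ⟨a⟩φ` with `a ∈ A^r` (`isL a = false`)
and `b ∈ A^l` (`isL b = true`). -/
inductive Formula (Act : Type) (isL : Act → Bool) : Type where
  | bot : Formula Act isL
  | top : Formula Act isL
  | and : Formula Act isL → Formula Act isL → Formula Act isL
  | or : Formula Act isL → Formula Act isL → Formula Act isL
  | box : {x : Act // isL x = true} → Formula Act isL → Formula Act isL
  | dia : {x : Act // isL x = false} → Formula Act isL → Formula Act isL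

/-- The satisfaction relation `p ⊨ φ`. -/
def Sat {Act : Type} (isL : Act → Bool) : Proc Act → Formula Act isL → Prop
  | _, .bot => False
  | _, .top => True
  | p, .and φ ψ => Sat isL p φ ∧ Sat isL p ψ
  | p, .or φ ψ => Sat isL p φ ∨ Sat isL p ψ
  | p, .box b φ => ∀ p', Step isL p b.1 p' → Sat isL p' φ
  | p, .dia a φ => ∃ p', Step isL p a.1 p' ∧ Sat isL p' φ

/-- `φ ≤ ψ`: every process term satisfying `φ` satisfies `ψ`. -/
def FormLe {Act : Type} (isL : Act → Bool) (φ ψ : Formula Act isL) : Prop :=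
  ∀ p, Sat isL p φ → Sat isL p ψ

/-- `φ ≡ ψ`: `φ` and `ψ` are satisfied by exactly the same process terms. -/
def FormEquiv {Act : Type} (isL : Act → Bool) (φ ψ : Formula Act isL) : Prop :=
  ∀ p, Sat isL p φ ↔ Sat isL p ψ

/-- `φ` is a characteristic formula for `p`: `p ⊨ φ` and every `q` satisfying
`φ` lies above `p` in the cc-simulation preorder. -/
def CharFor {Act : Type} (isL : Act → Bool) (φ : Formula Act isL) (p : Proc Act) : Prop :=
  Sat isL p φ ∧ ∀ q, Sat isL q φ → ccle isL p q

/-- The formula `φ` is represented by the (single) process term `p`. -/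
def Represents {Act : Type} (isL : Act → Bool) (p : Proc Act) (φ : Formula Act isL) : Prop :=
  ∀ q, Sat isL q φ ↔ ccle isL p q

section Aux

variable {Act : Type}

/-- Derivative list. -/
def D (isL : Act → Bool) [DecidableEq Act] : Proc Act → Act → List (Proc Act)
  | .nil, _ => []
  | .omega, a => if isL a then [.omega] else []
  | .act a' p, a => if a' = a then [p] else []
  | .plus p q, a => D isL p a ++ D isL q a

lemma step_iff_D [DecidableEq Act] {isL : Act → Bool} {p : Proc Act} {a : Act} {p' : Proc Act} :
    Step isL p a p' ↔ p' ∈ D isL p a := by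
  constructor
  · intro h
    induction h with
    | omega hb => simp [D, hb]
    | act => simp [D]
    | plusL _ ih => simp [D]; exact Or.inl ih
    | plusR _ ih => simp [D]; exact Or.inr ih
  · intro h
    induction p with
    | nil => simp [D] at h
    | omega =>
      by_cases hb : isL a
      · simp [D, hb] at h; subst h; exact .omega hb
      · simp [D, hb] at h
    | act a' p _ =>
      by_cases he : a' = a
      · simp [D, he] at h; subst h; subst he; exact .act
      · simp [D, he] at h
    | plus p q ih1 ih2 =>
      simp [D] at h
      rcases h with h | h
      · exact .plusL (ih1 h)
      · exact .plusR (ih2 h)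

/-- Size of a process term. -/
def sz : Proc Act → Nat
  | .nil => 1
  | .omega => 1
  | .act _ p => sz p + 1
  | .plus p q => sz p + sz q + 1

lemma sz_pos (p : Proc Act) : 1 ≤ sz p := by
  cases p <;> simp [sz]

lemma sz_D [DecidableEq Act] {isL : Act → Bool} {p : Proc Act} {a : Act} {p' : Proc Act}
    (h : p' ∈ D isL p a) : sz p' < sz p ∨ (p = .omega ∧ p' = .omega) := by
  induction p with
  | nil => simp [D] at h
  | omega =>
    by_cases hb : isL a
    · simp [D, hb] at h; exact Or.inr ⟨rfl, h⟩
    · simp [D, hb] at h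
  | act a' p _ =>
    by_cases he : a' = a
    · simp [D, he] at h; subst h; left; simp only [sz]; omega
    · simp [D, he] at h
  | plus p q ih1 ih2 =>
    simp [D] at h
    rcases h with h | h
    · rcases ih1 h with h' | ⟨hp, hp'⟩
      · left; simp only [sz]; omega
      · subst hp; subst hp'; left; have := sz_pos q; simp only [sz]; omega
    · rcases ih2 h with h' | ⟨hp, hp'⟩
      · left; simp only [sz]; omega
      · subst hp; subst hp'; left; have := sz_pos p; simp only [sz]; omega

/-- Sum of a list of processes. -/
def sumL : List (Proc Act) → Proc Act
  | [] => .nil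
  | p :: L => .plus p (sumL L)

lemma step_sumL {isL : Act → Bool} {L : List (Proc Act)} {a : Act} {p' : Proc Act} :
    Step isL (sumL L) a p' ↔ ∃ r ∈ L, Step isL r a p' := by
  induction L with
  | nil =>
    constructor
    · intro h; cases h
    · rintro ⟨r, hr, -⟩; simp at hr
  | cons p L ih =>
    constructor
    · intro h
      cases h with
      | plusL h => exact ⟨p, by simp, h⟩
      | plusR h => obtain ⟨r, hr, hs⟩ := ih.mp h; exact ⟨r, by simp [hr], hs⟩
    · rintro ⟨r, hr, hs⟩
      rcases List.mem_cons.mp hr with h | h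
      · subst h; exact .plusL hs
      · exact .plusR (ih.mpr ⟨r, h, hs⟩)

lemma ccle_is_ccsim (isL : Act → Bool) : IsCCSim isL (Step isL) (ccle isL) := by
  intro p q hpq
  obtain ⟨R, hR, hpqR⟩ := hpq
  obtain ⟨h1, h2⟩ := hR p q hpqR
  constructor
  · intro a ha p' hp'
    obtain ⟨q', hq', hR'⟩ := h1 a ha p' hp'
    exact ⟨q', hq', R, hR, hR'⟩
  · intro b hb q' hq'
    obtain ⟨p', hp', hR'⟩ := h2 b hb q' hq'
    exact ⟨p', hp', R, hR, hR'⟩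

lemma ccle_of {isL : Act → Bool} {p q : Proc Act}
    (h1 : ∀ a, isL a = false → ∀ p', Step isL p a p' → ∃ q', Step isL q a q' ∧ ccle isL p' q')
    (h2 : ∀ b, isL b = true → ∀ q', Step isL q b q' → ∃ p', Step isL p b p' ∧ ccle isL p' q') :
    ccle isL p q := by
  refine ⟨fun x y => (x = p ∧ y = q) ∨ ccle isL x y, ?_, Or.inl ⟨rfl, rfl⟩⟩
  rintro x y (⟨rfl, rfl⟩ | hxy)
  · constructor
    · intro a ha p' hp'
      obtain ⟨q', hq', hc⟩ := h1 a ha p' hp'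
      exact ⟨q', hq', Or.inr hc⟩
    · intro b hb q' hq'
      obtain ⟨p', hp', hc⟩ := h2 b hb q' hq'
      exact ⟨p', hp', Or.inr hc⟩
  · obtain ⟨ha, hb⟩ := ccle_is_ccsim isL x y hxy
    constructor
    · intro a hfa p' hp'
      obtain ⟨q', hq', hc⟩ := ha a hfa p' hp'
      exact ⟨q', hq', Or.inr hc⟩
    · intro b hfb q' hq'
      obtain ⟨p', hp', hc⟩ := hb b hfb q' hq'
      exact ⟨p', hp', Or.inr hc⟩

lemma omega_ccle (isL : Act → Bool) (q : Proc Act) : ccle isL .omega q := by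
  refine ⟨fun x _ => x = .omega, ?_, rfl⟩
  rintro x y rfl
  constructor
  · intro a ha p' hp'
    cases hp' with
    | omega hb => rw [hb] at ha; cases ha
  · intro b hb q' _
    exact ⟨.omega, .omega hb, rfl⟩

end Aux
section Join

variable {Act : Type} [Fintype Act] [DecidableEq Act]

/-- One level of the join construction, given the join `j` for smaller fuel. -/
noncomputable def joinAux (isL : Act → Bool) (j : Proc Act → Proc Act → Proc Act)
    (p1 p2 : Proc Act) : Proc Act :=
  if p1 = .omega then p2
  else if p2 = .omega then p1
  else
    sumL ((Finset.univ.toList.filter (fun a => !(isL a))).flatMap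
            (fun a => ((D isL p1 a ++ D isL p2 a).map (.act a))) ++
          (Finset.univ.toList.filter (fun b => isL b)).flatMap
            (fun b => (D isL p1 b).flatMap
              (fun x => (D isL p2 b).map (fun y => .act b (j x y)))))

/-- Fueled join of two processes. -/
noncomputable def joinF (isL : Act → Bool) : Nat → Proc Act → Proc Act → Proc Act
  | 0, _, _ => .nil
  | n+1, p1, p2 => joinAux isL (joinF isL n) p1 p2

lemma step_joinF {isL : Act → Bool} {n : Nat} {p1 p2 : Proc Act}
    (h1 : p1 ≠ .omega) (h2 : p2 ≠ .omega) {c : Act} {r : Proc Act} :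
    Step isL (joinF isL (n+1) p1 p2) c r ↔
      ((isL c = false ∧ (r ∈ D isL p1 c ∨ r ∈ D isL p2 c)) ∨
       (isL c = true ∧ ∃ x ∈ D isL p1 c, ∃ y ∈ D isL p2 c, r = joinF isL n x y)) := by
  rw [joinF]; unfold joinAux; rw [if_neg h1, if_neg h2, step_sumL]
  constructor
  · rintro ⟨s, hs, hstep⟩
    simp only [List.mem_append, List.mem_flatMap, List.mem_filter, List.mem_map,
      Finset.mem_toList, Finset.mem_univ, true_and] at hs
    rcases hs with ⟨a, ha, p', hp', rfl⟩ | ⟨b, hb, x, hx, y, hy, rfl⟩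
    · cases hstep
      rcases hp' with h | h
      · exact Or.inl ⟨by simpa using ha, Or.inl h⟩
      · exact Or.inl ⟨by simpa using ha, Or.inr h⟩
    · cases hstep
      exact Or.inr ⟨hb, x, hx, y, hy, rfl⟩
  · rintro (⟨hc, hr⟩ | ⟨hc, x, hx, y, hy, rfl⟩)
    · refine ⟨.act c r, ?_, .act⟩
      simp only [List.mem_append, List.mem_flatMap, List.mem_filter, List.mem_map,
        Finset.mem_toList, Finset.mem_univ, true_and]
      exact Or.inl ⟨c, by simp [hc], r, hr, rfl⟩
    · refine ⟨.act c (joinF isL n x y), ?_, .act⟩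
      simp only [List.mem_append, List.mem_flatMap, List.mem_filter, List.mem_map,
        Finset.mem_toList, Finset.mem_univ, true_and]
      exact Or.inr ⟨c, hc, x, hx, y, hy, rfl⟩

lemma joinF_ccle (isL : Act → Bool) :
    ∀ n : Nat, ∀ p1 p2 : Proc Act, sz p1 + sz p2 ≤ n → ∀ q,
      (ccle isL (joinF isL n p1 p2) q ↔ (ccle isL p1 q ∧ ccle isL p2 q)) := by
  intro n
  induction n with
  | zero =>
    intro p1 p2 hsz
    have := sz_pos p1; have := sz_pos p2; omega
  | succ n ih =>
    intro p1 p2 hsz q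
    by_cases h1 : p1 = .omega
    · subst h1
      rw [joinF]; unfold joinAux; rw [if_pos rfl]
      exact ⟨fun h => ⟨omega_ccle isL q, h⟩, fun h => h.2⟩
    by_cases h2 : p2 = .omega
    · subst h2
      rw [joinF]; unfold joinAux; rw [if_neg h1, if_pos rfl]
      exact ⟨fun h => ⟨h, omega_ccle isL q⟩, fun h => h.1⟩
    -- derivatives of p1, p2 are strictly smaller
    have hd1 : ∀ {a} {x : Proc Act}, x ∈ D isL p1 a → sz x < sz p1 := by
      intro a x hx
      rcases sz_D hx with h | ⟨h, -⟩
      · exact h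
      · exact absurd h h1
    have hd2 : ∀ {a} {y : Proc Act}, y ∈ D isL p2 a → sz y < sz p2 := by
      intro a y hy
      rcases sz_D hy with h | ⟨h, -⟩
      · exact h
      · exact absurd h h2
    constructor
    · intro hJ
      obtain ⟨hcov, hcon⟩ := ccle_is_ccsim isL _ _ hJ
      constructor
      · refine ccle_of ?_ ?_
        · intro a ha p' hp'
          have hmem : p' ∈ D isL p1 a := step_iff_D.mp hp'
          exact hcov a ha p' ((step_joinF h1 h2).mpr (Or.inl ⟨ha, Or.inl hmem⟩))
        · intro b hb q' hq'
          obtain ⟨r, hr, hrq⟩ := hcon b hb q' hq'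
          rcases (step_joinF h1 h2).mp hr with ⟨hc, -⟩ | ⟨-, x, hx, y, hy, rfl⟩
          · rw [hb] at hc; cases hc
          · have hle : sz x + sz y ≤ n := by
              have := hd1 hx; have := hd2 hy; omega
            obtain ⟨hcx, -⟩ := (ih x y hle q').mp hrq
            exact ⟨x, step_iff_D.mpr hx, hcx⟩
      · refine ccle_of ?_ ?_
        · intro a ha p' hp'
          have hmem : p' ∈ D isL p2 a := step_iff_D.mp hp'
          exact hcov a ha p' ((step_joinF h1 h2).mpr (Or.inl ⟨ha, Or.inr hmem⟩))
        · intro b hb q' hq'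
          obtain ⟨r, hr, hrq⟩ := hcon b hb q' hq'
          rcases (step_joinF h1 h2).mp hr with ⟨hc, -⟩ | ⟨-, x, hx, y, hy, rfl⟩
          · rw [hb] at hc; cases hc
          · have hle : sz x + sz y ≤ n := by
              have := hd1 hx; have := hd2 hy; omega
            obtain ⟨-, hcy⟩ := (ih x y hle q').mp hrq
            exact ⟨y, step_iff_D.mpr hy, hcy⟩
    · rintro ⟨hc1, hc2⟩
      refine ccle_of ?_ ?_
      · intro a ha r hr
        rcases (step_joinF h1 h2).mp hr with ⟨-, hmem | hmem⟩ | ⟨hc, -⟩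
        · exact (ccle_is_ccsim isL _ _ hc1).1 a ha r (step_iff_D.mpr hmem)
        · exact (ccle_is_ccsim isL _ _ hc2).1 a ha r (step_iff_D.mpr hmem)
        · rw [ha] at hc; cases hc
      · intro b hb q' hq'
        obtain ⟨x, hx, hcx⟩ := (ccle_is_ccsim isL _ _ hc1).2 b hb q' hq'
        obtain ⟨y, hy, hcy⟩ := (ccle_is_ccsim isL _ _ hc2).2 b hb q' hq'
        have hmx : x ∈ D isL p1 b := step_iff_D.mp hx
        have hmy : y ∈ D isL p2 b := step_iff_D.mp hy
        have hle : sz x + sz y ≤ n := by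
          have := hd1 hmx; have := hd2 hmy; omega
        refine ⟨joinF isL n x y, (step_joinF h1 h2).mpr (Or.inr ⟨hb, x, hmx, y, hmy, rfl⟩), ?_⟩
        exact (ih x y hle q').mpr ⟨hcx, hcy⟩

end Join
section Main

variable {Act : Type} [Fintype Act] [DecidableEq Act]

lemma dia_ccle {isL : Act → Bool} {a : Act} (ha : isL a = false) (p q : Proc Act) :
    ccle isL (.plus (.act a p) .omega) q ↔ ∃ q', Step isL q a q' ∧ ccle isL p q' := by
  constructor
  · intro h
    exact (ccle_is_ccsim isL _ _ h).1 a ha p (.plusL .act)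
  · rintro ⟨q0, hq0, hpq0⟩
    refine ccle_of ?_ ?_
    · intro c hc r hr
      cases hr with
      | plusL h => cases h; exact ⟨q0, hq0, hpq0⟩
      | plusR h => cases h with | omega hcb => rw [hcb] at hc; cases hc
    · intro b hb q' _
      exact ⟨.omega, .plusR (.omega hb), omega_ccle isL q'⟩

/-- Process representing `[b]` over a finite list of processes. -/
noncomputable def boxP (isL : Act → Bool) (b : Act) (L : List (Proc Act)) : Proc Act :=
  sumL (L.map (.act b) ++
    (Finset.univ.toList.filter (fun b' => isL b' && b' != b)).map (fun b' => .act b' .omega))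

lemma box_ccle {isL : Act → Bool} {b : Act} (hb : isL b = true) (L : List (Proc Act))
    (q : Proc Act) :
    ccle isL (boxP isL b L) q ↔ ∀ q', Step isL q b q' → ∃ p ∈ L, ccle isL p q' := by
  constructor
  · intro h q' hq'
    obtain ⟨r, hr, hrq⟩ := (ccle_is_ccsim isL _ _ h).2 b hb q' hq'
    rw [boxP, step_sumL] at hr
    obtain ⟨s, hs, hstep⟩ := hr
    simp only [List.mem_append, List.mem_map, List.mem_filter, Finset.mem_toList,
      Finset.mem_univ, true_and, Bool.and_eq_true, bne_iff_ne] at hs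
    rcases hs with ⟨p, hp, rfl⟩ | ⟨b', ⟨-, hb'⟩, rfl⟩
    · cases hstep; exact ⟨_, hp, hrq⟩
    · cases hstep; exact absurd rfl hb'
  · intro h
    refine ccle_of ?_ ?_
    · intro c hc r hr
      rw [boxP, step_sumL] at hr
      obtain ⟨s, hs, hstep⟩ := hr
      simp only [List.mem_append, List.mem_map, List.mem_filter, Finset.mem_toList,
        Finset.mem_univ, true_and, Bool.and_eq_true, bne_iff_ne] at hs
      rcases hs with ⟨p, -, rfl⟩ | ⟨b', ⟨hb', -⟩, rfl⟩
      · cases hstep; rw [hb] at hc; cases hc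
      · cases hstep; rw [hb'] at hc; cases hc
    · intro c hcL q' hq'
      by_cases hcb : c = b
      · subst hcb
        obtain ⟨p, hp, hpq⟩ := h q' hq'
        refine ⟨p, ?_, hpq⟩
        rw [boxP, step_sumL]
        exact ⟨.act c p, by simp [hp], .act⟩
      · refine ⟨.omega, ?_, omega_ccle isL q'⟩
        rw [boxP, step_sumL]
        refine ⟨.act c .omega, ?_, .act⟩
        simp only [List.mem_append, List.mem_map, List.mem_filter, Finset.mem_toList,
          Finset.mem_univ, true_and, Bool.and_eq_true, bne_iff_ne]
        exact Or.inr ⟨c, ⟨hcL, hcb⟩, rfl⟩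

end Main
/-- Every formula `φ` of the cc-modal logic can be represented by a finite
(possibly empty) set of process terms: there exists a finite set `M` of
process terms such that, for all process terms `q`, `q ⊨ φ` iff `p ≲cc q` for
some `p ∈ M`. -/
theorem represented_by_finite_set {Act : Type} [Fintype Act] [DecidableEq Act]
    (isL : Act → Bool) (φ : Formula Act isL) :
    ∃ M : Finset (Proc Act), ∀ q, Sat isL q φ ↔ ∃ p ∈ M, ccle isL p q := by
  induction φ with
  | bot => exact ⟨∅, by simp [Sat]⟩
  | top =>
    refine ⟨{.omega}, fun q => ?_⟩
    exact iff_of_true trivial ⟨.omega, Finset.mem_singleton_self _, omega_ccle isL q⟩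
  | and φ ψ ih1 ih2 =>
    obtain ⟨M1, h1⟩ := ih1
    obtain ⟨M2, h2⟩ := ih2
    refine ⟨(M1 ×ˢ M2).image (fun pr => joinF isL (sz pr.1 + sz pr.2) pr.1 pr.2), fun q => ?_⟩
    rw [show Sat isL q (φ.and ψ) = (Sat isL q φ ∧ Sat isL q ψ) from rfl, h1 q, h2 q]
    constructor
    · rintro ⟨⟨p1, hp1, hc1⟩, ⟨p2, hp2, hc2⟩⟩
      refine ⟨joinF isL (sz p1 + sz p2) p1 p2, ?_, ?_⟩
      · exact Finset.mem_image.mpr ⟨(p1, p2), Finset.mem_product.mpr ⟨hp1, hp2⟩, rfl⟩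
      · exact (joinF_ccle isL _ p1 p2 le_rfl q).mpr ⟨hc1, hc2⟩
    · rintro ⟨p, hp, hc⟩
      obtain ⟨⟨p1, p2⟩, hmem, rfl⟩ := Finset.mem_image.mp hp
      obtain ⟨hp1, hp2⟩ := Finset.mem_product.mp hmem
      obtain ⟨hc1, hc2⟩ := (joinF_ccle isL _ p1 p2 le_rfl q).mp hc
      exact ⟨⟨p1, hp1, hc1⟩, ⟨p2, hp2, hc2⟩⟩
  | or φ ψ ih1 ih2 =>
    obtain ⟨M1, h1⟩ := ih1
    obtain ⟨M2, h2⟩ := ih2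
    refine ⟨M1 ∪ M2, fun q => ?_⟩
    rw [show Sat isL q (φ.or ψ) = (Sat isL q φ ∨ Sat isL q ψ) from rfl, h1 q, h2 q]
    constructor
    · rintro (⟨p, hp, hc⟩ | ⟨p, hp, hc⟩)
      · exact ⟨p, Finset.mem_union_left _ hp, hc⟩
      · exact ⟨p, Finset.mem_union_right _ hp, hc⟩
    · rintro ⟨p, hp, hc⟩
      rcases Finset.mem_union.mp hp with h | h
      · exact Or.inl ⟨p, h, hc⟩
      · exact Or.inr ⟨p, h, hc⟩
  | box b φ ih =>
    obtain ⟨M, hM⟩ := ih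
    refine ⟨{boxP isL b.1 M.toList}, fun q => ?_⟩
    constructor
    · intro h
      refine ⟨_, Finset.mem_singleton_self _, (box_ccle b.2 M.toList q).mpr ?_⟩
      intro q' hq'
      obtain ⟨p, hp, hc⟩ := (hM q').mp (h q' hq')
      exact ⟨p, Finset.mem_toList.mpr hp, hc⟩
    · rintro ⟨p, hp, hc⟩
      rw [Finset.mem_singleton] at hp
      subst hp
      intro q' hq'
      obtain ⟨p', hp', hc'⟩ := (box_ccle b.2 M.toList q).mp hc q' hq'
      exact (hM q').mpr ⟨p', Finset.mem_toList.mp hp', hc'⟩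
  | dia a φ ih =>
    obtain ⟨M, hM⟩ := ih
    refine ⟨M.image (fun p => .plus (.act a.1 p) .omega), fun q => ?_⟩
    constructor
    · rintro ⟨q', hq', hsat⟩
      obtain ⟨p, hp, hc⟩ := (hM q').mp hsat
      exact ⟨.plus (.act a.1 p) .omega, Finset.mem_image_of_mem _ hp,
        (dia_ccle a.2 p q).mpr ⟨q', hq', hc⟩⟩
    · rintro ⟨r, hr, hc⟩
      obtain ⟨p, hp, rfl⟩ := Finset.mem_image.mp hr
      obtain ⟨q', hq', hcp⟩ := (dia_ccle a.2 p q).mp hc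
      exact ⟨q', hq', (hM q').mpr ⟨p, hp, hcp⟩⟩
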